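/- arXiv:0708.3009 — 5 statements merged into one kernel-verified Lean document; each statement's English description precedes it below -/
import Mathlib

section
/- Let n and f be natural numbers with 0 ≤ 2f ≤ n, and let ν = ((2^f), (n-2f)) be the bipartition of n whose first component is the partition with f rows of length 2. Let D_ν be the set of permutations d in the symmetric group S_n such that the bitableau t^ν d is row standard and the first column of its first component tableau is increasing from top to bottom. If d ∈ D_ν and d = d' s_j with ℓ(d) = ℓ(d') + 1 for some simple transposition s_j (1 ≤ j ≤ n-1), then d' ∈ D_ν. -/
/-!
STATEMENT 1.  Positions are 0-based: the initial bitableau `t^ν` for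
`ν = ((2^f),(n-2f))` puts `0,…,2f-1` along the rows of the `f × 2` first
component and `2f,…,n-1` in the single row of the second component.
A permutation of `{0,…,n-1}` is modelled as an element of `Equiv.Perm ℕ`
fixing everything `≥ n`; the entry of `t^ν d` at position `p` is `d p`.
The paper's right-action product `d' s_j` corresponds to `sw j * d'`
(apply `d'` first, then the simple transposition), and the Coxeter length
is the number of inversions.
-/

noncomputable section

/-- The simple transposition `s_{j+1}` (paper's 1-based `s_j` is `sw (j-1)`). -/
def sw (a : ℕ) : Equiv.Perm ℕ := Equiv.swap a (a + 1)

/-- Coxeter length = number of inversions. -/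
noncomputable def len (σ : Equiv.Perm ℕ) : ℕ :=
  Set.ncard {p : ℕ × ℕ | p.1 < p.2 ∧ σ p.2 < σ p.1}

/-- `d ∈ D_ν` for `ν = ((2^f),(n-2f))`: `d` permutes `{0,…,n-1}`, the bitableau
`t^ν d` is row standard, and the first column of its first component increases
from top to bottom. -/
def Dnu (n f : ℕ) (d : Equiv.Perm ℕ) : Prop :=
  (∀ x, n ≤ x → d x = x) ∧
  (∀ k, k < f → d (2 * k) < d (2 * k + 1)) ∧
  (∀ k, k + 1 < f → d (2 * k) < d (2 * k + 2)) ∧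
  (∀ j, 2 * f ≤ j → j + 1 < n → d j < d (j + 1))

/-!
Write `d' = s_j d` as a product of functions, so `d'` is `d` with the values `j` and `j + 1`
interchanged. If `j` stood to the left of `j + 1` in `d`, this would create exactly one new
inversion, making `d'` longer than `d`. So `j + 1` stands to the left of `j`, and then every
ascent `p < q`, `d p < d q` of `d` survives in `d'`. All conditions defining `D_ν` are ascents
at fixed positions, and positions `≥ n` stay fixed because `j + 1 < n`.
-/

open Equiv

def inversions (σ : Perm ℕ) : Set (ℕ × ℕ) :=
  {p | p.1 < p.2 ∧ σ p.2 < σ p.1}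

lemma len_eq_ncard_inversions (σ : Perm ℕ) : len σ = (inversions σ).ncard := rfl

lemma swap_succ_lt_swap_succ_iff {j a b : ℕ} (hab : ¬(a = j ∧ b = j + 1))
    (hba : ¬(b = j ∧ a = j + 1)) : swap j (j + 1) a < swap j (j + 1) b ↔ a < b := by
  rw [swap_apply_def, swap_apply_def]
  split_ifs <;> omega

lemma inversions_sw_mul {σ : Perm ℕ} {j p q : ℕ} (hpq : p < q) (hp : σ p = j)
    (hq : σ q = j + 1) : inversions (sw j * σ) = insert (p, q) (inversions σ) := by
  ext ⟨x, y⟩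
  simp only [inversions, sw, Perm.mul_apply, Set.mem_insert_iff, Set.mem_ofPred_eq,
    Prod.mk.injEq]
  by_cases hxy : x = p ∧ y = q
  · obtain ⟨rfl, rfl⟩ := hxy
    simp [hp, hq, hpq]
  by_cases hlt : x < y
  · have hσ : ¬(σ x = j ∧ σ y = j + 1) := fun ⟨h₁, h₂⟩ =>
      hxy ⟨σ.injective (h₁.trans hp.symm), σ.injective (h₂.trans hq.symm)⟩
    have hσ' : ¬(σ y = j ∧ σ x = j + 1) := fun ⟨h₁, h₂⟩ => by
      have := σ.injective (h₁.trans hp.symm)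
      have := σ.injective (h₂.trans hq.symm)
      omega
    rw [swap_succ_lt_swap_succ_iff hσ' hσ]
    tauto
  · simp [hlt, hxy]

lemma len_sw_mul_of_lt {σ : Perm ℕ} {j p q : ℕ} (hfin : (inversions σ).Finite) (hpq : p < q)
    (hp : σ p = j) (hq : σ q = j + 1) : len (sw j * σ) = len σ + 1 := by
  have hnot : (p, q) ∉ inversions σ := by
    simp only [inversions, Set.mem_ofPred_eq, hp, hq]
    omega
  rw [len_eq_ncard_inversions, len_eq_ncard_inversions, inversions_sw_mul hpq hp hq,
    Set.ncard_insert_of_notMem hnot hfin]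

lemma sw_mul_apply_lt_of_len_eq_add_one {σ : Perm ℕ} {j p q : ℕ}
    (hlen : len σ = len (sw j * σ) + 1) (hpq : p < q) (hσ : σ p < σ q) :
    (sw j * σ) p < (sw j * σ) q := by
  -- `Set.ncard` is `0` on infinite sets, so `len σ ≠ 0` forces finiteness.
  have hfin : (inversions σ).Finite := Set.finite_of_ncard_ne_zero (by
    rw [← len_eq_ncard_inversions]
    omega)
  have hbad : ¬(σ p = j ∧ σ q = j + 1) := fun ⟨hp, hq⟩ => by
    have := len_sw_mul_of_lt hfin hpq hp hq
    omega
  rw [Perm.mul_apply, Perm.mul_apply, sw, swap_succ_lt_swap_succ_iff hbad (by omega)]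
  exact hσ

theorem stmt1_general (n f : ℕ) (d d' : Equiv.Perm ℕ) (j : ℕ)
    (hj : j + 2 ≤ n) (hdd : d = sw j * d') (hlen : len d = len d' + 1)
    (hd : Dnu n f d) : Dnu n f d' := by
  obtain ⟨hfix, hrow, hcol, hrow₂⟩ := hd
  obtain rfl : d' = sw j * d := by rw [hdd, sw, swap_mul_self_mul]
  have hasc {p q : ℕ} (hpq : p < q) : d p < d q → (sw j * d) p < (sw j * d) q :=
    sw_mul_apply_lt_of_len_eq_add_one hlen hpq
  refine ⟨fun x hx => ?_, fun k hk => hasc (by omega) (hrow k hk),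
    fun k hk => hasc (by omega) (hcol k hk), fun i hi hin => hasc (by omega) (hrow₂ i hi hin)⟩
  rw [Perm.mul_apply, hfix x hx, sw]
  exact swap_apply_of_ne_of_ne (by omega) (by omega)

theorem stmt1 (n f : ℕ) (h2f : 2 * f ≤ n) (d d' : Equiv.Perm ℕ) (j : ℕ)
    (hj : j + 2 ≤ n) (hdd : d = sw j * d') (hlen : len d = len d' + 1)
    (hd : Dnu n f d) : Dnu n f d' :=
  stmt1_general n f d d' j hj hdd hlen hd

end
end

section
/- Let f ≥ 1, let S_{(2^f)} ≤ S_{2f} be the Young subgroup generated by s_1, s_3, ..., s_{2f-1}, and let Π ≤ S_{2f} be the group permuting the f consecutive blocks {1,2},{3,4},...,{2f-1,2f} (generated by the elements s_{2i} s_{2i-1} s_{2i+1} s_{2i} for 1 ≤ i ≤ f-1). Set Ψ = S_{(2^f)} ⋊ Π. If d ∈ D_f (the set of distinguished elements of D_ν lying in S_{2f}), then for every w ∈ Ψ one has ℓ(wd) ≥ ℓ(d). -/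
/-!
STATEMENT 2.  Everything is 0-based inside `Equiv.Perm ℕ`: elements of
`S_{2f}` are permutations fixing all `x ≥ 2f`.  The paper's 1-based simple
transposition `s_j` is `sw (j-1)`, so the Young subgroup `S_{(2^f)}` is
generated by `sw (2k)` for `k < f`, and the block-permuting group `Π` is
generated by the paper elements `s̃_i = s_{2i} s_{2i-1} s_{2i+1} s_{2i}`
(`1 ≤ i ≤ f-1`), which (with the paper's right-action composition) are the
permutations `st i0 = sw (2i0+1) * sw (2i0+2) * sw (2i0) * sw (2i0+1)`
for `i0 = i - 1 < f - 1`.  `Ψ = S_{(2^f)} ⋊ Π` is the subgroup generated by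
all of these.  The paper's right-action product `w d` is the function
`d ∘ w`, i.e. `d * w` in Mathlib's convention, and length = #inversions.
-/

noncomputable section

/-- The block-swapping generator `s̃_{i+1} = s_{2i+2} s_{2i+1} s_{2i+3} s_{2i+2}`
(paper, 1-based), as a permutation. -/
def st (i : ℕ) : Equiv.Perm ℕ :=
  sw (2 * i + 1) * sw (2 * i + 2) * sw (2 * i) * sw (2 * i + 1)

/-- `Ψ = S_{(2^f)} ⋊ Π`. -/
def Psi (f : ℕ) : Subgroup (Equiv.Perm ℕ) :=
  Subgroup.closure
    ({σ | ∃ k, k < f ∧ σ = sw (2 * k)} ∪ {σ | ∃ i, i + 1 < f ∧ σ = st i})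

/-- `d ∈ D_f`: `d ∈ S_{2f}`, the tableau `t^{(2^f)} d` is row standard and its
first column increases from top to bottom. -/
def Df (f : ℕ) (d : Equiv.Perm ℕ) : Prop :=
  (∀ x, 2 * f ≤ x → d x = x) ∧
  (∀ k, k < f → d (2 * k) < d (2 * k + 1)) ∧
  (∀ k, k + 1 < f → d (2 * k) < d (2 * k + 2))

/-!
An inversion `(a, b)` of `d ∈ D_f` must have `a` odd, i.e. `a` is the larger entry of its block
`{a - 1, a}` while `b` lies in a later block, and then `d (a - 1) < d b` as well. Every `w ∈ Ψ`
maps blocks to blocks, so pulling `(a, b)` back along `w` gives an inversion of `d * w`, unless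
`w` reverses the order of `a` and `b`; in that case `(a - 1, b)` pulled back is one. This
injects the inversions of `d` into those of `d * w`.
-/

open Equiv

lemma inversions_subset_of_forall_le_apply_eq {σ : Perm ℕ} {N : ℕ}
    (hσ : ∀ x, N ≤ x → σ x = x) : inversions σ ⊆ Set.Iio N ×ˢ Set.Iio N := by
  rintro ⟨a, b⟩ ⟨hab, hba⟩
  dsimp only at hab hba
  have hb : b < N := by
    by_contra! hNb
    rw [hσ b hNb] at hba
    rcases lt_or_ge a N with ha | ha
    · have hσa : σ a < N := by
        by_contra! h
        have := σ.injective ((hσ _ h).symm)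
        omega
      omega
    · rw [hσ a ha] at hba
      omega
  exact ⟨hab.trans hb, hb⟩

/-- `x ↦ x xor 1`. A permutation commutes with it iff it maps blocks `{2k, 2k + 1}` to blocks. -/
def blockPartner : Perm ℕ :=
  Function.Involutive.toPerm (fun x => if x % 2 = 0 then x + 1 else x - 1)
    (fun x => by dsimp only; split_ifs <;> omega)

lemma blockPartner_apply (x : ℕ) :
    blockPartner x = if x % 2 = 0 then x + 1 else x - 1 := rfl

@[simp]
lemma blockPartner_blockPartner (x : ℕ) : blockPartner (blockPartner x) = x :=
  Function.Involutive.toPerm_involutive _ x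

lemma lt_blockPartner_of_lt_of_ne {x y : ℕ} (hyx : y < x) (hy : y ≠ blockPartner x) :
    y < blockPartner x := by
  rw [blockPartner_apply] at *
  split_ifs at * <;> omega

lemma sw_apply (a x : ℕ) :
    sw a x = if x = a then a + 1 else if x = a + 1 then a else x := by
  simp only [sw, Equiv.swap_apply_def]

lemma st_apply (i x : ℕ) : st i x =
    if x = 2 * i then 2 * i + 2 else if x = 2 * i + 1 then 2 * i + 3
    else if x = 2 * i + 2 then 2 * i else if x = 2 * i + 3 then 2 * i + 1 else x := by
  simp only [st, Perm.mul_apply, sw_apply]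
  split_ifs <;> omega

lemma Psi_le_fixingSubgroup (f : ℕ) :
    Psi f ≤ fixingSubgroup (Perm ℕ) (Set.Ici (2 * f)) := by
  refine (Subgroup.closure_le _).2 ?_
  rintro σ (⟨k, hk, rfl⟩ | ⟨i, hi, rfl⟩) <;>
    simp only [SetLike.mem_coe, mem_fixingSubgroup_iff, Set.mem_Ici, Perm.smul_def]
  · intro x hx; rw [sw_apply]; split_ifs <;> omega
  · intro x hx; rw [st_apply]; split_ifs <;> omega

lemma Psi_le_centralizer_blockPartner (f : ℕ) :
    Psi f ≤ Subgroup.centralizer {blockPartner} := by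
  refine (Subgroup.closure_le _).2 ?_
  rintro σ (⟨k, -, rfl⟩ | ⟨i, -, rfl⟩) <;>
    simp only [SetLike.mem_coe, Subgroup.mem_centralizer_singleton_iff, Perm.ext_iff,
      Perm.mul_apply, blockPartner_apply]
  · intro x; simp only [sw_apply]; split_ifs <;> omega
  · intro x; simp only [st_apply]; split_ifs <;> omega

lemma len_le_len_mul_of_mem_centralizer {d w : Perm ℕ}
    (hw : w ∈ Subgroup.centralizer {blockPartner})
    (hd : ∀ p ∈ inversions d, blockPartner p.1 < p.1 ∧ d (blockPartner p.1) < d p.2)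
    (hfin : (inversions (d * w)).Finite) : len d ≤ len (d * w) := by
  have hw' : ∀ x, w⁻¹ (blockPartner x) = blockPartner (w⁻¹ x) := fun x =>
    Perm.ext_iff.1 (Subgroup.mem_centralizer_singleton_iff.1 (inv_mem hw)) x
  let F : ℕ × ℕ → ℕ × ℕ := fun p =>
    if w⁻¹ p.1 < w⁻¹ p.2 then (w⁻¹ p.1, w⁻¹ p.2) else (w⁻¹ p.2, w⁻¹ (blockPartner p.1))
  let G : ℕ × ℕ → ℕ × ℕ := fun q =>
    if w q.1 < w q.2 then (w q.1, w q.2) else (blockPartner (w q.2), w q.1)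
  have hGF : Set.LeftInvOn G F (inversions d) := by
    rintro ⟨a, b⟩ hp
    obtain ⟨hτa, -⟩ := hd _ hp
    have hab : a < b := hp.1
    by_cases hwab : w⁻¹ a < w⁻¹ b
    · have hF : F (a, b) = (w⁻¹ a, w⁻¹ b) := if_pos hwab
      simp only [hF, G, Perm.coe_inv, Equiv.apply_symm_apply, if_pos hab]
    · have hF : F (a, b) = (w⁻¹ b, w⁻¹ (blockPartner a)) := if_neg hwab
      have hbτa : ¬ b < blockPartner a := by dsimp only at hτa; omega
      simp only [hF, G, Perm.coe_inv, Equiv.apply_symm_apply, if_neg hbτa,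
        blockPartner_blockPartner]
  refine Set.ncard_le_ncard_of_injOn F ?_ hGF.injOn hfin
  rintro ⟨a, b⟩ hp
  obtain ⟨hτa, hdτa⟩ := hd _ hp
  obtain ⟨hab, hdba⟩ := hp
  dsimp only at hab hdba hτa hdτa
  by_cases hwab : w⁻¹ a < w⁻¹ b
  · simp only [F, if_pos hwab]
    refine ⟨hwab, ?_⟩
    simpa only [Perm.mul_apply, Perm.coe_inv, Equiv.apply_symm_apply] using hdba
  · simp only [F, if_neg hwab]
    have hne : w⁻¹ b ≠ blockPartner (w⁻¹ a) := by
      rw [← hw', Ne, (w⁻¹).injective.eq_iff]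
      omega
    have hlt : w⁻¹ b < w⁻¹ a := lt_of_le_of_ne (not_lt.1 hwab)
      (fun h => hab.ne (w⁻¹.injective h).symm)
    refine ⟨hw' a ▸ lt_blockPartner_of_lt_of_ne hlt hne, ?_⟩
    simpa only [Perm.mul_apply, Perm.coe_inv, Equiv.apply_symm_apply] using hdτa

namespace Df

variable {f : ℕ} {d : Perm ℕ}

lemma lt_apply_of_lt_div_two (hd : Df f d) {k y : ℕ} (hky : k < y / 2) (hy : y < 2 * f) :
    d (2 * k) < d y := by
  have hmono : StrictMonoOn (fun j => d (2 * j)) (Set.Iic (f - 1)) :=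
    strictMonoOn_Iic_of_lt_succ fun j hj => by
      simpa [Order.succ_eq_add_one, mul_add] using hd.2.2 j (by omega)
  have hblock : d (2 * k) < d (2 * (y / 2)) :=
    hmono (by simp only [Set.mem_Iic]; omega) (by simp only [Set.mem_Iic]; omega) hky
  rcases Nat.even_or_odd' y with ⟨m, rfl | rfl⟩
  · simpa using hblock
  · have hdiv : (2 * m + 1) / 2 = m := by omega
    rw [hdiv] at hblock
    exact hblock.trans (hd.2.1 m (by omega))

lemma blockPartner_of_mem_inversions (hd : Df f d) {p : ℕ × ℕ} (hp : p ∈ inversions d) :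
    blockPartner p.1 < p.1 ∧ d (blockPartner p.1) < d p.2 := by
  obtain ⟨a, b⟩ := p
  have hb : b < 2 * f := (inversions_subset_of_forall_le_apply_eq hd.1 hp).2
  obtain ⟨hab, hdba⟩ := hp
  dsimp only at hab hdba ⊢
  rcases Nat.even_or_odd' a with ⟨m, rfl | rfl⟩
  · exfalso
    rcases lt_or_ge m (b / 2) with hm | hm
    · exact (hd.lt_apply_of_lt_div_two hm hb).not_gt hdba
    · obtain rfl : b = 2 * m + 1 := by omega
      exact (hd.2.1 m (by omega)).not_gt hdba
  · have hτ : blockPartner (2 * m + 1) = 2 * m := by rw [blockPartner_apply]; split_ifs <;> omega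
    rw [hτ]
    exact ⟨by omega, hd.lt_apply_of_lt_div_two (by omega) hb⟩

end Df

theorem stmt2_general (f : ℕ) (d : Equiv.Perm ℕ) (hd : Df f d)
    (w : Equiv.Perm ℕ) (hw : w ∈ Psi f) : len d ≤ len (d * w) := by
  have hwfix := (mem_fixingSubgroup_iff _).1 (Psi_le_fixingSubgroup f hw)
  simp only [Set.mem_Ici, Perm.smul_def] at hwfix
  have hdwfix : ∀ x, 2 * f ≤ x → (d * w) x = x := fun x hx => by
    rw [Perm.mul_apply, hwfix x hx, hd.1 x hx]
  refine len_le_len_mul_of_mem_centralizer (Psi_le_centralizer_blockPartner f hw)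
    (fun p hp => hd.blockPartner_of_mem_inversions hp) ?_
  exact ((Set.finite_Iio _).prod (Set.finite_Iio _)).subset
    (inversions_subset_of_forall_le_apply_eq hdwfix)

theorem stmt2 (f : ℕ) (hf : 1 ≤ f) (d : Equiv.Perm ℕ) (hd : Df f d)
    (w : Equiv.Perm ℕ) (hw : w ∈ Psi f) : len d ≤ len (d * w) :=
  stmt2_general f d hd w hw
end
end

section
/- Let n, f be natural numbers with 2f ≤ n and let ν = ((2^f),(n-2f)). For any d ∈ D_ν with d ≠ d_0 d_{J_0}, where J_0 = (n-2f+1, n-2f+2, ..., n) and d_0 is the element of S_{2f} ⊆ S_n with (a)d_0 = (a+1)/2 for odd a and (a)d_0 = 2f+1-a/2 for even a, there exists an integer 1 ≤ j ≤ n-1 such that d s_j ∈ D_ν and ℓ(d s_j) = ℓ(d) + 1. In other words, d_0 d_{J_0} is the unique maximal element of D_ν under the weak right Bruhat order restricted to D_ν. -/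
/-!
STATEMENT 5.  0-based conventions as in the other combinatorial statements:
permutations of `{0,…,n-1}` are elements of `Equiv.Perm ℕ` fixing `x ≥ n`;
the entry of the bitableau `t^ν d` at position `p` is `d p`; the paper's
right-action product `d s_j` (1-based `j`, `1 ≤ j ≤ n-1`) is `sw j0 * d`
for the 0-based index `j0 = j - 1` (so `j0 + 2 ≤ n`).  The element
`d_0 d_{J_0}` is the explicit permutation `maxd` described by the
hypotheses: it sends `2k ↦ n-2f+k`, `2k+1 ↦ n-1-k` (`k < f`) and
`a ↦ a-2f` for `2f ≤ a < n`.
-/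

noncomputable section

/-!
If no `sw j` lifts `d` inside `Dnu`, then whenever the value `j + 1` stands to the right of `j`,
the two positions form a cover of the shape (row or first-column neighbours). Reading the values
in increasing order, they can then never leave the first component once they enter it, so by
counting the `n - 2f` smallest values fill the second component from left to right. The next `f`
values run down the first column: a value landing earlier on an odd position could only be followed
by values on ever smaller odd positions, and these run out. The last `f` values then climb the
second column from the bottom, which is the arrangement of `d₀ d_{J₀}`.
-/

/-- Cover relations of the positions of the bitableau of shape `((2^f), (n-2f))`: neighbours in a
row, or in the first column of the first component. -/
def IsCover (f p q : ℕ) : Prop :=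
  (q = p + 1 ∧ (2 * f ≤ p ∨ p % 2 = 0)) ∨ (q = p + 2 ∧ p % 2 = 0 ∧ q < 2 * f)

section Fixed

variable {n : ℕ} {σ : Equiv.Perm ℕ}

theorem apply_lt_of_forall_le_apply_eq (hσ : ∀ x, n ≤ x → σ x = x) {x : ℕ} (hx : x < n) :
    σ x < n := by
  by_contra h
  have := σ.injective (hσ _ (not_lt.1 h))
  omega

theorem symm_apply_lt_of_forall_le_apply_eq (hσ : ∀ x, n ≤ x → σ x = x) {x : ℕ} (hx : x < n) :
    σ.symm x < n := by
  by_contra h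
  have := hσ _ (not_lt.1 h)
  rw [Equiv.apply_symm_apply] at this
  omega

theorem inversions_finite (hσ : ∀ x, n ≤ x → σ x = x) :
    {p : ℕ × ℕ | p.1 < p.2 ∧ σ p.2 < σ p.1}.Finite := by
  refine ((Set.finite_Iio n).prod (Set.finite_Iio n)).subset ?_
  rintro ⟨a, b⟩ ⟨hab, hσab⟩
  dsimp only at hab hσab
  have hb : b < n := by
    by_contra hbn
    have hσb := hσ b (not_lt.1 hbn)
    rcases lt_or_ge a n with han | han
    · have := apply_lt_of_forall_le_apply_eq hσ han
      omega
    · have := hσ a han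
      omega
  exact ⟨show a < n by omega, hb⟩

end Fixed

theorem swap_lt_swap_iff (j x y : ℕ) :
    Equiv.swap j (j + 1) y < Equiv.swap j (j + 1) x ↔
      (y < x ∧ ¬((x = j ∧ y = j + 1) ∨ (x = j + 1 ∧ y = j))) ∨ (x = j ∧ y = j + 1) := by
  simp only [Equiv.swap_apply_def]
  split_ifs <;> omega

theorem len_sw_mul {n j : ℕ} {d : Equiv.Perm ℕ} (hd : ∀ x, n ≤ x → d x = x)
    (hj : d.symm j < d.symm (j + 1)) : len (sw j * d) = len d + 1 := by
  have hinv : {p : ℕ × ℕ | p.1 < p.2 ∧ (sw j * d) p.2 < (sw j * d) p.1}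
      = insert (d.symm j, d.symm (j + 1)) {p : ℕ × ℕ | p.1 < p.2 ∧ d p.2 < d p.1} := by
    ext ⟨a, b⟩
    have hj' : d a = j → d b = j + 1 → a < b := by
      rintro rfl hb
      rwa [← hb, Equiv.symm_apply_apply, Equiv.symm_apply_apply] at hj
    have hj'' : d a = j + 1 → d b = j → b < a := by
      rintro ha rfl
      rwa [← ha, Equiv.symm_apply_apply, Equiv.symm_apply_apply] at hj
    simp only [Set.mem_ofPred_eq, Set.mem_insert_iff, Prod.mk.injEq, Equiv.eq_symm_apply, sw,
      Equiv.Perm.mul_apply, swap_lt_swap_iff]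
    omega
  have hnew : (d.symm j, d.symm (j + 1)) ∉ {p : ℕ × ℕ | p.1 < p.2 ∧ d p.2 < d p.1} := by
    simp
  rw [len, hinv, Set.ncard_insert_of_notMem hnew (inversions_finite hd), len]

theorem Dnu.sw_mul {n f j : ℕ} {d : Equiv.Perm ℕ} (hd : Dnu n f d) (hj : j + 1 < n)
    (hcov : ¬ IsCover f (d.symm j) (d.symm (j + 1))) : Dnu n f (sw j * d) := by
  obtain ⟨hfix, hrow, hcol, hchain⟩ := hd
  have hmono : ∀ a b, IsCover f a b → d a < d b → (sw j * d) a < (sw j * d) b := by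
    intro a b hab hlt
    simp only [sw, Equiv.Perm.mul_apply, swap_lt_swap_iff]
    refine Or.inl ⟨hlt, ?_⟩
    rintro (⟨ha, hb⟩ | ⟨ha, hb⟩)
    · omega
    · rw [← ha, ← hb, Equiv.symm_apply_apply, Equiv.symm_apply_apply] at hcov
      exact hcov hab
  refine ⟨fun x hx => ?_, fun k hk => hmono _ _ ?_ (hrow k hk),
    fun k hk => hmono _ _ ?_ (hcol k hk), fun a ha han => hmono _ _ ?_ (hchain a ha han)⟩
  · simp only [sw, Equiv.Perm.mul_apply, hfix x hx]
    exact Equiv.swap_apply_of_ne_of_ne (by omega) (by omega)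
  all_goals unfold IsCover; omega

def AscentsAreCovers (n f : ℕ) (d : Equiv.Perm ℕ) : Prop :=
  ∀ j, j + 1 < n → d.symm j < d.symm (j + 1) → IsCover f (d.symm j) (d.symm (j + 1))

namespace AscentsAreCovers

variable {n f : ℕ} {d : Equiv.Perm ℕ}

theorem symm_lt_two_mul_of_le (H : AscentsAreCovers n f d) {v w : ℕ}
    (hv : d.symm v < 2 * f) (hvw : v ≤ w) (hw : w < n) : d.symm w < 2 * f := by
  induction w, hvw using Nat.le_induction with
  | base => exact hv
  | succ w _ ih =>
    have hw' := ih (by omega)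
    rcases lt_trichotomy (d.symm w) (d.symm (w + 1)) with h | h | h
    · have := H w hw h
      unfold IsCover at this
      omega
    · exact absurd (d.symm.injective h) (by omega)
    · omega

theorem two_mul_le_symm (H : AscentsAreCovers n f d) {v : ℕ} (hv : v < n - 2 * f) :
    2 * f ≤ d.symm v := by
  by_contra hlt
  have hcard : (Finset.Ico v n).card ≤ (Finset.range (2 * f)).card :=
    Finset.card_le_card_of_injOn d.symm
      (fun w hw => by
        simp only [Finset.coe_Ico, Set.mem_Ico] at hw
        simpa using H.symm_lt_two_mul_of_le (not_le.1 hlt) hw.1 hw.2)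
      d.symm.injective.injOn
  simp only [Nat.card_Ico, Finset.card_range] at hcard
  omega

theorem symm_eq_two_mul_add (H : AscentsAreCovers n f d) (hd : Dnu n f d) {v : ℕ}
    (hv : v < n - 2 * f) : d.symm v = 2 * f + v := by
  induction v using Nat.strong_induction_on with
  | _ v ih =>
    have hge := H.two_mul_le_symm hv
    have hlt := symm_apply_lt_of_forall_le_apply_eq hd.1 (show v < n by omega)
    rcases lt_trichotomy (d.symm v) (2 * f + v) with h | h | h
    · have hprev := ih (d.symm v - 2 * f) (by omega) (by omega)
      rw [Nat.add_sub_cancel' hge] at hprev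
      have := d.symm.injective hprev
      omega
    · exact h
    · -- the entry left of position `d⁻¹ v` in the second row is a smaller value
      have hprev := hd.2.2.2 (d.symm v - 1) (by omega) (by omega)
      rw [Nat.sub_add_cancel (by omega), Equiv.apply_symm_apply] at hprev
      have := ih _ hprev (by omega)
      rw [Equiv.symm_apply_apply] at this
      omega

theorem symm_lt_two_mul_of_sub_le (H : AscentsAreCovers n f d) (hd : Dnu n f d) {v : ℕ}
    (hv : n - 2 * f ≤ v) (hvn : v < n) : d.symm v < 2 * f := by
  by_contra hge
  have hlt := symm_apply_lt_of_forall_le_apply_eq hd.1 hvn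
  have h := H.symm_eq_two_mul_add hd (v := d.symm v - 2 * f) (by omega)
  rw [Nat.add_sub_cancel' (not_lt.1 hge)] at h
  have := d.symm.injective h
  omega

theorem odd_descent (H : AscentsAreCovers n f d) {w w' : ℕ} (hodd : d.symm w % 2 = 1)
    (hw : d.symm w < 2 * f) (hev : ∀ i, 2 * i < d.symm w → ∃ u < w, d.symm u = 2 * i)
    (hww' : w ≤ w') (hw' : w' < n) :
    d.symm w' % 2 = 1 ∧ d.symm w' + 2 * (w' - w) ≤ d.symm w := by
  induction w', hww' using Nat.le_induction with
  | base => simpa using hodd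
  | succ w' hle ih =>
    obtain ⟨ho, hb⟩ := ih (by omega)
    have hdesc : d.symm (w' + 1) < d.symm w' := by
      rcases lt_trichotomy (d.symm w') (d.symm (w' + 1)) with h | h | h
      · have := H w' hw' h
        unfold IsCover at this
        omega
      · exact absurd (d.symm.injective h) (by omega)
      · exact h
    have hodd' : d.symm (w' + 1) % 2 = 1 := by
      by_contra heven
      obtain ⟨u, hu, hue⟩ := hev (d.symm (w' + 1) / 2) (by omega)
      have := d.symm.injective (hue.trans (Nat.mul_div_cancel' (Nat.dvd_of_mod_eq_zero (by omega))))
      omega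
    exact ⟨hodd', by omega⟩

theorem symm_sub_two_mul_add (H : AscentsAreCovers n f d) (hd : Dnu n f d) (h2f : 2 * f ≤ n)
    {k : ℕ} (hk : k < f) : d.symm (n - 2 * f + k) = 2 * k := by
  induction k using Nat.strong_induction_on with
  | _ k ih =>
    have hsmaller : ∀ x < 2 * f, d x < n - 2 * f + k → ∃ i < k, x = 2 * i := by
      intro x hx hdx
      have hge : n - 2 * f ≤ d x := by
        by_contra h
        have := H.symm_eq_two_mul_add hd (v := d x) (by omega)
        rw [Equiv.symm_apply_apply] at this
        omega
      refine ⟨d x - (n - 2 * f), by omega, ?_⟩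
      have := ih (d x - (n - 2 * f)) (by omega) (by omega)
      rwa [Nat.add_sub_cancel' hge, Equiv.symm_apply_apply] at this
    have hp := H.symm_lt_two_mul_of_sub_le hd (v := n - 2 * f + k) (by omega) (by omega)
    obtain ⟨i, hi | hi⟩ := Nat.even_or_odd' (d.symm (n - 2 * f + k))
    · have hdi : d (2 * i) = n - 2 * f + k := by rw [← hi, Equiv.apply_symm_apply]
      rcases lt_trichotomy i k with h | rfl | h
      · have := d.symm.injective ((ih i h (by omega)).trans hi.symm)
        omega
      · exact hi
      · -- the position above `2 * i` in the first column holds a smaller value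
        have habove := hd.2.2.1 (i - 1) (by omega)
        rw [show 2 * (i - 1) + 2 = 2 * i by omega, hdi] at habove
        obtain ⟨i', hi', h'⟩ := hsmaller _ (by omega) habove
        omega
    · have hdi : d (2 * i + 1) = n - 2 * f + k := by rw [← hi, Equiv.apply_symm_apply]
      have hleft := hd.2.1 i (by omega)
      rw [hdi] at hleft
      obtain ⟨i', hi', h'⟩ := hsmaller _ (by omega) hleft
      have := (H.odd_descent (w := n - 2 * f + k) (w' := n - 1) (by omega) (by omega)
        (fun i'' hi'' => ⟨n - 2 * f + i'', by omega, ih i'' (by omega) (by omega)⟩)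
        (by omega) (by omega)).2
      omega

theorem symm_sub_one_sub (H : AscentsAreCovers n f d) (hd : Dnu n f d) (h2f : 2 * f ≤ n)
    {k : ℕ} (hk : k < f) : d.symm (n - 1 - k) = 2 * k + 1 := by
  have hodd : ∀ w, n - f ≤ w → w < n → d.symm w % 2 = 1 ∧ d.symm w < 2 * f := by
    intro w hw hwn
    have hlt := H.symm_lt_two_mul_of_sub_le hd (v := w) (by omega) hwn
    refine ⟨?_, hlt⟩
    by_contra heven
    have h := H.symm_sub_two_mul_add hd h2f (k := d.symm w / 2) (by omega)
    rw [Nat.mul_div_cancel' (Nat.dvd_of_mod_eq_zero (by omega))] at h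
    have := d.symm.injective h
    omega
  have hev : ∀ w, n - f ≤ w → w < n → ∀ i, 2 * i < d.symm w → ∃ u < w, d.symm u = 2 * i :=
    fun w hw hwn i hi =>
      have := (hodd w hw hwn).2
      ⟨n - 2 * f + i, by omega, H.symm_sub_two_mul_add hd h2f (by omega)⟩
  have hupper := (H.odd_descent (hodd (n - f) le_rfl (by omega)).1
    (hodd (n - f) le_rfl (by omega)).2 (hev _ le_rfl (by omega))
    (w' := n - 1 - k) (by omega) (by omega)).2
  have hlower := H.odd_descent (hodd (n - 1 - k) (by omega) (by omega)).1
    (hodd (n - 1 - k) (by omega) (by omega)).2 (hev _ (by omega) (by omega))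
    (w' := n - 1) (by omega) (by omega)
  have := (hodd (n - f) le_rfl (by omega)).2
  omega

end AscentsAreCovers

theorem stmt5 (n f : ℕ) (h2f : 2 * f ≤ n) (d maxd : Equiv.Perm ℕ)
    (hm1 : ∀ k, k < f → maxd (2 * k) = n - 2 * f + k)
    (hm2 : ∀ k, k < f → maxd (2 * k + 1) = n - 1 - k)
    (hm3 : ∀ a, 2 * f ≤ a → a < n → maxd a = a - 2 * f)
    (hm4 : ∀ x, n ≤ x → maxd x = x)
    (hd : Dnu n f d) (hne : d ≠ maxd) :
    ∃ j, j + 2 ≤ n ∧ Dnu n f (sw j * d) ∧ len (sw j * d) = len d + 1 := by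
  by_contra hcon
  have H : AscentsAreCovers n f d := fun j hj hlt => by
    by_contra hcov
    exact hcon ⟨j, by omega, hd.sw_mul hj hcov, len_sw_mul hd.1 hlt⟩
  refine hne (Equiv.ext fun x => ?_)
  rcases le_or_gt n x with hxn | hxn
  · rw [hd.1 x hxn, hm4 x hxn]
  rcases le_or_gt (2 * f) x with hx | hx
  · rw [hm3 x hx hxn, ← Equiv.eq_symm_apply, H.symm_eq_two_mul_add hd (by omega)]
    omega
  obtain ⟨k, rfl | rfl⟩ := Nat.even_or_odd' x
  · rw [hm1 k (by omega), ← Equiv.eq_symm_apply, H.symm_sub_two_mul_add hd h2f (by omega)]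
  · rw [hm2 k (by omega), ← Equiv.eq_symm_apply, H.symm_sub_one_sub hd h2f (by omega)]
end
end

section
/- For any integers m ≥ 1, n ≥ 0, c ∈ Z, t ≥ 0 and any weight λ in the set X_n of weights of V^{⊗n} (so ⟨λ, α_i^∨⟩ ∈ {-n,...,n} for i < m and ⟨λ, α_m^∨⟩ ∈ {-2n,-2n+2,...,2n}), the element p'_λ := (∏_{i=1}^{m-1} [K_i; -λ̂_i-1 choose 2n][K_i; -λ̂_i+2n choose 2n]) · ([K_m; -λ̂_m-1 choose 4n][K_m; -λ̂_m+4n choose 4n]), where λ̂_i := ⟨λ, α_i^∨⟩, lies in the Lusztig integral form U_A of the quantized enveloping algebra of sp_{2m} and acts on V^{⊗n} as the projection onto the λ-weight space: p'_λ x = x for x in the λ-weight space and p'_λ x = 0 for x in any μ-weight space with μ ≠ λ. -/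
/-!
STATEMENT 12.  We work in the field `ℚ(q) = RatFunc ℚ` with `q = X`, and
`A = ℤ[q,q⁻¹]` is the subring generated by `q, q⁻¹`.  A weight `λ` of
`sp_{2m}` is recorded through its pairing vector
`λ̂ = (⟨λ,α_1^∨⟩,…,⟨λ,α_m^∨⟩) : Fin m → ℤ`; membership in `X_n` is the
stated bound: `λ̂_i ∈ {-n,…,n}` for `i < m` and
`λ̂_m ∈ {-2n,-2n+2,…,2n}`.  On a vector of weight `μ`, `k̃_i` acts by the
scalar `q_i^{μ̂_i}` (`q_i = q` for `i < m`, `q_m = q²`), so the Lusztig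
element `[K_i; c, t] = ∏_{s=1}^t (k̃_i q_i^{c-s+1} - k̃_i⁻¹ q_i^{-c+s-1}) /
(q_i^s - q_i^{-s})` acts by the scalar `gauss q_i μ̂_i c t`, and
`p'_λ = (∏_{i<m} [K_i;-λ̂_i-1,2n][K_i;-λ̂_i+2n,2n]) ·
[K_m;-λ̂_m-1,4n][K_m;-λ̂_m+4n,4n]` acts on the `μ`-weight space by
`Pproj m n λ̂ μ̂`.  The claims: (a) each Gaussian-binomial scalar lies in
`A` (which is the content of `[K_i;c,t] ∈ U_A`, so `p'_λ ∈ U_A`), and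
(b) `p'_λ` acts as the projection onto the `λ`-weight space: its scalar on
a `μ`-weight vector is `1` if `μ = λ` and `0` otherwise.
-/

noncomputable section

abbrev Fq := RatFunc ℚ

def qF : Fq := RatFunc.X

/-- `A = ℤ[q, q⁻¹]` inside `ℚ(q)`. -/
def Asub : Subring Fq := Subring.closure {qF, qF⁻¹}

/-- The scalar by which `[K; c, t]` (built from `u = q_i`) acts on a vector
on which `k̃` acts by `u^e`. -/
def gauss (u : Fq) (e c : ℤ) (t : ℕ) : Fq :=
  ∏ s ∈ Finset.range t,
    (u ^ (e + c - (s : ℤ)) - u ^ (-(e + c - (s : ℤ)))) /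
      (u ^ ((s : ℤ) + 1) - u ^ (-((s : ℤ) + 1)))

/-- Membership of a weight (through its pairing vector) in the set `X_n` of
weights of `V^{⊗n}`, as described in the statement. -/
def inXn (m n : ℕ) (lam : Fin m → ℤ) : Prop :=
  ∀ i : Fin m,
    ((i : ℕ) + 1 < m → -(n : ℤ) ≤ lam i ∧ lam i ≤ (n : ℤ)) ∧
    ((i : ℕ) + 1 = m →
      (∃ kk : ℤ, lam i = 2 * kk) ∧ -(2 * (n : ℤ)) ≤ lam i ∧ lam i ≤ 2 * (n : ℤ))

/-- The scalar by which `p'_λ` acts on the `μ`-weight space. -/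
def Pproj (m n : ℕ) (lam mu : Fin m → ℤ) : Fq :=
  ∏ i : Fin m,
    if (i : ℕ) + 1 < m then
      gauss qF (mu i) (-(lam i) - 1) (2 * n) *
        gauss qF (mu i) (-(lam i) + 2 * (n : ℤ)) (2 * n)
    else
      gauss (qF ^ 2) (mu i) (-(lam i) - 1) (4 * n) *
        gauss (qF ^ 2) (mu i) (-(lam i) + 4 * (n : ℤ)) (4 * n)

/-!
On a `μ`-weight vector `[K_i; c, t]` acts by the Gaussian binomial `[μ̂_i + c; t]` in `q_i`, which
lies in `ℤ[q_i, q_i⁻¹]` by the `q`-Pascal rule for nonnegative tops and by the reflection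
`[a; t] = (-1)^t [t - 1 - a; t]` for negative ones. With `d = μ̂_i - λ̂_i` and `|d| ≤ N`
(`N = 2n` or `4n`), the factor `[d - 1; N]` vanishes when `d > 0` and `[d + N; N]` when `d < 0`,
because a top in `[0, N)` kills a factor of the numerator; for `d = 0` the product is
`[-1; N][N; N] = (-1)^N = 1`.
-/

open Finset

theorem not_isOfFinOrder_of_transcendental {R A : Type*} [CommRing R] [Nontrivial R] [Ring A]
    [Algebra R A] {x : A} (hx : Transcendental R x) : ¬ IsOfFinOrder x := by
  intro hfin
  obtain ⟨n, hn, hxn⟩ := hfin.exists_pow_eq_one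
  refine hx ⟨Polynomial.X ^ n - Polynomial.C 1, Polynomial.X_pow_sub_C_ne_zero hn 1, ?_⟩
  simp [hxn]

section QBinomial

variable {K : Type*} [Field K]

-- `qdiff u a = (u - u⁻¹)[a]_u`, so `qbinom u a t` is the Gaussian binomial `[a; t]_u`, any `a : ℤ`.
def qdiff (u : K) (a : ℤ) : K := u ^ a - u ^ (-a)

def qfall (u : K) (a : ℤ) (t : ℕ) : K := ∏ s ∈ range t, qdiff u (a - s)

def qbinom (u : K) (a : ℤ) (t : ℕ) : K := qfall u a t / qfall u t t

variable {u : K}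

@[simp] theorem qdiff_zero : qdiff u 0 = 0 := by simp [qdiff]

theorem qdiff_neg (a : ℤ) : qdiff u (-a) = -qdiff u a := by simp [qdiff]

theorem qdiff_ne_zero (hu0 : u ≠ 0) (hu : ¬ IsOfFinOrder u) {a : ℤ} (ha : a ≠ 0) :
    qdiff u a ≠ 0 := by
  intro h
  refine hu (isOfFinOrder_iff_zpow_eq_one.mpr ⟨a - -a, by omega, ?_⟩)
  rw [zpow_sub₀ hu0, sub_eq_zero.mp h, div_self (zpow_ne_zero _ hu0)]

theorem qdiff_eq_add (hu0 : u ≠ 0) (a b : ℤ) :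
    qdiff u a = u ^ b * qdiff u (a - b) + u ^ (b - a) * qdiff u b := by
  simp only [qdiff, mul_sub, ← zpow_add₀ hu0]
  ring_nf

theorem zpow_mem_of_inv_mem {S : Subring K} (hS : u ∈ S) (hS' : u⁻¹ ∈ S) (k : ℤ) :
    u ^ k ∈ S := by
  cases k with
  | ofNat k => simpa using pow_mem hS k
  | negSucc k => simpa [zpow_negSucc] using pow_mem hS' (k + 1)

@[simp] theorem qfall_zero_right (a : ℤ) : qfall u a 0 = 1 := by simp [qfall]

theorem qfall_succ (a : ℤ) (t : ℕ) : qfall u a (t + 1) = qdiff u a * qfall u (a - 1) t := by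
  simp only [qfall, prod_range_succ', Nat.cast_add, Nat.cast_one, Nat.cast_zero, sub_zero,
    sub_add_eq_sub_sub_swap, mul_comm]

theorem qfall_succ' (a : ℤ) (t : ℕ) : qfall u a (t + 1) = qfall u a t * qdiff u (a - t) :=
  prod_range_succ _ t

theorem qfall_eq_zero {a : ℤ} {t : ℕ} (h0 : 0 ≤ a) (h1 : a < t) : qfall u a t = 0 :=
  prod_eq_zero (i := a.toNat) (mem_range.mpr (by omega))
    (by rw [Int.toNat_of_nonneg h0, sub_self, qdiff_zero])

theorem qfall_self (t : ℕ) : qfall u t t = ∏ s ∈ range t, qdiff u (s + 1) := by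
  rw [qfall, ← prod_range_reflect]
  refine prod_congr rfl fun s hs => ?_
  have hcast : ((t - 1 - s : ℕ) : ℤ) = t - 1 - s := by have := mem_range.mp hs; omega
  rw [hcast]
  ring_nf

theorem qfall_self_ne_zero (hu0 : u ≠ 0) (hu : ¬ IsOfFinOrder u) (t : ℕ) : qfall u t t ≠ 0 := by
  rw [qfall_self]
  exact prod_ne_zero_iff.mpr fun s _ => qdiff_ne_zero hu0 hu (by omega)

theorem qfall_reflect (a : ℤ) (t : ℕ) : qfall u a t = (-1) ^ t * qfall u (t - 1 - a) t := by
  have hneg := prod_neg (s := range t) fun s => qdiff u (t - 1 - a - s)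
  rw [card_range] at hneg
  rw [qfall, qfall, ← hneg, ← prod_range_reflect]
  refine prod_congr rfl fun s hs => ?_
  have hcast : ((t - 1 - s : ℕ) : ℤ) = t - 1 - s := by have := mem_range.mp hs; omega
  rw [hcast, ← qdiff_neg]
  ring_nf

@[simp] theorem qbinom_zero_right (a : ℤ) : qbinom u a 0 = 1 := by simp [qbinom]

theorem qbinom_eq_zero {a : ℤ} {t : ℕ} (h0 : 0 ≤ a) (h1 : a < t) : qbinom u a t = 0 := by
  rw [qbinom, qfall_eq_zero h0 h1, zero_div]

theorem qbinom_self (hu0 : u ≠ 0) (hu : ¬ IsOfFinOrder u) (t : ℕ) : qbinom u t t = 1 :=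
  div_self (qfall_self_ne_zero hu0 hu t)

theorem qbinom_reflect (a : ℤ) (t : ℕ) : qbinom u a t = (-1) ^ t * qbinom u (t - 1 - a) t := by
  rw [qbinom, qbinom, qfall_reflect, mul_div_assoc]

theorem qbinom_neg_one (hu0 : u ≠ 0) (hu : ¬ IsOfFinOrder u) (t : ℕ) :
    qbinom u (-1) t = (-1) ^ t := by
  rw [qbinom_reflect, sub_neg_eq_add, sub_add_cancel, qbinom_self hu0 hu, mul_one]

theorem qbinom_succ (hu0 : u ≠ 0) (hu : ¬ IsOfFinOrder u) (a : ℤ) (t : ℕ) :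
    qbinom u a (t + 1) = u ^ ((t : ℤ) + 1) * qbinom u (a - 1) (t + 1) +
      u ^ ((t : ℤ) + 1 - a) * qbinom u (a - 1) t := by
  have hD := qfall_self_ne_zero hu0 hu t
  have hd : qdiff u ((t : ℤ) + 1) ≠ 0 := qdiff_ne_zero hu0 hu (by omega)
  have hden : qfall u ((t + 1 : ℕ) : ℤ) (t + 1) = qdiff u ((t : ℤ) + 1) * qfall u t t := by
    rw [qfall_succ]; push_cast; rw [add_sub_cancel_right]
  rw [qbinom, qbinom, qbinom, hden, qfall_succ a, qfall_succ' (a - 1),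
    qdiff_eq_add hu0 a ((t : ℤ) + 1)]
  field_simp
  ring_nf

theorem qbinom_natCast_mem {S : Subring K} (hu0 : u ≠ 0) (hu : ¬ IsOfFinOrder u) (hS : u ∈ S)
    (hS' : u⁻¹ ∈ S) (k t : ℕ) : qbinom u k t ∈ S := by
  induction k generalizing t with
  | zero =>
    cases t with
    | zero => simp
    | succ t => simp [qbinom_eq_zero le_rfl (Nat.cast_pos.mpr t.succ_pos)]
  | succ k ih =>
    cases t with
    | zero => simp
    | succ t =>
      rw [Nat.cast_succ, qbinom_succ hu0 hu, add_sub_cancel_right]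
      exact add_mem (mul_mem (zpow_mem_of_inv_mem hS hS' _) (ih _))
        (mul_mem (zpow_mem_of_inv_mem hS hS' _) (ih _))

theorem qbinom_mem {S : Subring K} (hu0 : u ≠ 0) (hu : ¬ IsOfFinOrder u) (hS : u ∈ S)
    (hS' : u⁻¹ ∈ S) (a : ℤ) (t : ℕ) : qbinom u a t ∈ S := by
  rcases le_or_gt 0 a with ha | ha
  · lift a to ℕ using ha
    exact qbinom_natCast_mem hu0 hu hS hS' a t
  · have hrefl : (t : ℤ) - 1 - a = ((t - 1 - a).toNat : ℕ) := by omega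
    rw [qbinom_reflect, hrefl]
    exact mul_mem (pow_mem (neg_mem S.one_mem) t) (qbinom_natCast_mem hu0 hu hS hS' _ t)

theorem qbinom_sub_one_mul_qbinom_add (hu0 : u ≠ 0) (hu : ¬ IsOfFinOrder u) {N : ℕ}
    (hN : Even N) {d : ℤ} (hd : |d| ≤ N) :
    qbinom u (d - 1) N * qbinom u (d + N) N = if d = 0 then 1 else 0 := by
  obtain ⟨hlo, hhi⟩ := abs_le.mp hd
  rcases lt_trichotomy d 0 with hneg | rfl | hpos
  · rw [if_neg hneg.ne, qbinom_eq_zero (a := d + N) (by omega) (by omega), mul_zero]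
  · rw [if_pos rfl, zero_sub, zero_add, qbinom_neg_one hu0 hu, qbinom_self hu0 hu,
      hN.neg_one_pow, one_mul]
  · rw [if_neg hpos.ne', qbinom_eq_zero (a := d - 1) (by omega) (by omega), zero_mul]

end QBinomial

theorem gauss_eq_qbinom (u : Fq) (e c : ℤ) (t : ℕ) : gauss u e c t = qbinom u (e + c) t := by
  rw [gauss, qbinom, qfall_self, qfall, ← prod_div_distrib]
  rfl

theorem qF_ne_zero : qF ≠ 0 := RatFunc.X_ne_zero

-- `RatFunc.transcendental_X` uses the algebra structure coming from `ℚ[X]`, which is not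
-- reducibly equal to the default `ℚ`-algebra structure of a characteristic-zero field.
theorem not_isOfFinOrder_qF_pow {k : ℕ} (hk : k ≠ 0) : ¬ IsOfFinOrder (qF ^ k) := fun h =>
  @not_isOfFinOrder_of_transcendental ℚ Fq _ _ _ (RatFunc.instAlgebraOfPolynomial ℚ ℚ) qF
    RatFunc.transcendental_X (h.of_pow hk)

theorem gauss_qF_pow_mem_Asub {k : ℕ} (hk : k ≠ 0) (e c : ℤ) (t : ℕ) :
    gauss (qF ^ k) e c t ∈ Asub := by
  have hq : qF ∈ Asub := Subring.subset_closure (Set.mem_insert _ _)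
  have hq' : qF⁻¹ ∈ Asub := Subring.subset_closure (Set.mem_insert_of_mem _ rfl)
  rw [gauss_eq_qbinom]
  exact qbinom_mem (pow_ne_zero k qF_ne_zero) (not_isOfFinOrder_qF_pow hk) (pow_mem hq k)
    (inv_pow qF k ▸ pow_mem hq' k) _ _

theorem gauss_qF_pow_mul_gauss {k : ℕ} (hk : k ≠ 0) {N : ℕ} (hN : Even N) {e l : ℤ}
    (hel : |e - l| ≤ N) :
    gauss (qF ^ k) e (-l - 1) N * gauss (qF ^ k) e (-l + N) N = if e = l then 1 else 0 := by
  rw [gauss_eq_qbinom, gauss_eq_qbinom, show e + (-l - 1) = e - l - 1 by ring,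
    show e + (-l + N) = e - l + N by ring,
    qbinom_sub_one_mul_qbinom_add (pow_ne_zero k qF_ne_zero) (not_isOfFinOrder_qF_pow hk) hN hel]
  simp only [sub_eq_zero]

theorem stmt12_general (m n : ℕ) (lam mu : Fin m → ℤ)
    (hlam : inXn m n lam) (hmu : inXn m n mu) :
    -- integrality: [K_i; c, t] ∈ U_A (at the level of weight-space scalars),
    -- hence p'_λ ∈ U_A
    (∀ (e c : ℤ) (t : ℕ), gauss qF e c t ∈ Asub ∧ gauss (qF ^ 2) e c t ∈ Asub) ∧
    -- p'_λ acts as the projection onto the λ-weight space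
    Pproj m n lam mu = (if mu = lam then 1 else 0) := by
  refine ⟨fun e c t => ⟨by simpa using gauss_qF_pow_mem_Asub one_ne_zero e c t,
    gauss_qF_pow_mem_Asub two_ne_zero e c t⟩, ?_⟩
  rw [Pproj, Fintype.prod_congr _ (fun i => if mu i = lam i then (1 : Fq) else 0),
    Fintype.prod_boole]
  · simp [funext_iff]
  intro i
  by_cases hi : (i : ℕ) + 1 < m
  · obtain ⟨hl, hl'⟩ := (hlam i).1 hi
    obtain ⟨hm, hm'⟩ := (hmu i).1 hi
    simpa [hi] using gauss_qF_pow_mul_gauss one_ne_zero (even_two_mul n)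
      (abs_le.mpr ⟨by omega, by omega⟩ : |mu i - lam i| ≤ ((2 * n : ℕ) : ℤ))
  · obtain ⟨-, hl, hl'⟩ := (hlam i).2 (by omega)
    obtain ⟨-, hm, hm'⟩ := (hmu i).2 (by omega)
    simpa [hi] using gauss_qF_pow_mul_gauss two_ne_zero ⟨2 * n, by ring⟩
      (abs_le.mpr ⟨by omega, by omega⟩ : |mu i - lam i| ≤ ((4 * n : ℕ) : ℤ))

theorem stmt12 (m n : ℕ) (hm : 1 ≤ m) (lam mu : Fin m → ℤ)
    (hlam : inXn m n lam) (hmu : inXn m n mu) :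
    -- integrality: [K_i; c, t] ∈ U_A (at the level of weight-space scalars),
    -- hence p'_λ ∈ U_A
    (∀ (e c : ℤ) (t : ℕ), gauss qF e c t ∈ Asub ∧ gauss (qF ^ 2) e c t ∈ Asub) ∧
    -- p'_λ acts as the projection onto the λ-weight space
    Pproj m n lam mu = (if mu = lam then 1 else 0) :=
  stmt12_general m n lam mu hlam hmu
end
end

section
/- Let V be a 2m-dimensional vector space with basis v_1,...,v_{2m} over a field K, and for a multi-index i = (i_1,...,i_n) ∈ {1,...,2m}^n define the symplectic length ℓ_s(i) as the maximal number of pairwise disjoint pairs (s,t) with 1 ≤ s < t ≤ n and i_s = 2m+1-i_t. Then in the right BMW action on V^{⊗n}, the operator γ'_k (the image of E_k) annihilates the simple tensor v_i whenever i_k ≠ 2m+1-i_{k+1}; consequently, if f > ℓ_s(i), then v_i (E_1 E_3 ··· E_{2f-1}) = 0, and more generally the two-sided ideal B^{(f)} of B_n(-ζ^{2m+1}, ζ) generated by E_1E_3···E_{2f-1} annihilates v_i. -/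
/-!
STATEMENT 16.  `K` is a field and `ζ` (the image of `q`, nonzero) the
parameter.  `V^{⊗n}` is realised through its basis of simple tensors
`v_idx`, `idx : Fin n → Fin (2m)` (0-based; the paper's `i' = 2m+1-i` is
`Fin.rev`), simple tensors being indicator functions `Pi.single idx 1`,
with the right BMW action given by `Matrix.vecMul`: `E_{k+1}` acts as
`gopK … k` (the operator `γ'` in slots `k, k+1`) and `T_{k+1}` as
`bopK … k`.  `hasPairs m n f idx` says `idx` contains `f` pairwise disjoint
symplectic pairs, so `f > ℓ_s(idx)` is `¬ hasPairs m n f idx`.  The image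
of the BMW algebra is the subring of the matrix algebra generated by all
the `bopK`/`gopK`, and the image of the two-sided ideal `B^{(f)}` consists
of sums of elements `u * (E_1 E_3 ⋯ E_{2f-1}) * w` with `u, w` in that
subring; annihilation of each such element is asserted.
-/

noncomputable section
open Matrix
open scoped Classical

def rho (m : ℕ) (i : Fin (2 * m)) : ℤ :=
  if (i : ℕ) < m then (m : ℤ) - (i : ℕ) else (m : ℤ) - (i : ℕ) - 1

def eps (m : ℕ) (i : Fin (2 * m)) : ℤ := if (i : ℕ) < m then 1 else -1

def tmK (K : Type*) [Field K] (m : ℕ) (i j k l : Fin (2 * m)) :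
    Matrix (Fin (2 * m) × Fin (2 * m)) (Fin (2 * m) × Fin (2 * m)) K :=
  Matrix.single (i, k) (j, l) 1

def betaMatK (K : Type*) [Field K] (m : ℕ) (ζ : K) :
    Matrix (Fin (2 * m) × Fin (2 * m)) (Fin (2 * m) × Fin (2 * m)) K :=
  (∑ i, (ζ • tmK K m i i i i + ζ⁻¹ • tmK K m i i.rev i.rev i))
  + (∑ i, ∑ j, if i ≠ j ∧ i ≠ j.rev then tmK K m i j j i else 0)
  + (ζ - ζ⁻¹) •
      (∑ i, ∑ j, if i < j then
          tmK K m i i j j -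
            (((eps m i * eps m j : ℤ) : K) * ζ ^ (rho m j - rho m i)) •
              tmK K m i j.rev i.rev j
        else 0)

def gammaMatK (K : Type*) [Field K] (m : ℕ) (ζ : K) :
    Matrix (Fin (2 * m) × Fin (2 * m)) (Fin (2 * m) × Fin (2 * m)) K :=
  ∑ i, ∑ j,
    (((eps m i * eps m j : ℤ) : K) * ζ ^ (rho m j - rho m i)) •
      tmK K m i j.rev i.rev j

def liftOpK (K : Type*) [Field K] (m n : ℕ) (k l : Fin n)
    (M : Matrix (Fin (2 * m) × Fin (2 * m)) (Fin (2 * m) × Fin (2 * m)) K) :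
    Matrix (Fin n → Fin (2 * m)) (Fin n → Fin (2 * m)) K :=
  fun g h =>
    if ∀ j, j ≠ k → j ≠ l → g j = h j then M (g k, g l) (h k, h l) else 0

def bopK (K : Type*) [Field K] (m n : ℕ) (ζ : K) (i : ℕ) :
    Matrix (Fin n → Fin (2 * m)) (Fin n → Fin (2 * m)) K :=
  if h : i + 1 < n then
    liftOpK K m n ⟨i, by omega⟩ ⟨i + 1, h⟩ (betaMatK K m ζ) else 1

def gopK (K : Type*) [Field K] (m n : ℕ) (ζ : K) (i : ℕ) :
    Matrix (Fin n → Fin (2 * m)) (Fin n → Fin (2 * m)) K :=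
  if h : i + 1 < n then
    liftOpK K m n ⟨i, by omega⟩ ⟨i + 1, h⟩ (gammaMatK K m ζ) else 1

/-- `idx` contains `f` pairwise disjoint symplectic pairs. -/
def hasPairs (m n f : ℕ) (idx : Fin n → Fin (2 * m)) : Prop :=
  ∃ P : Fin f → Fin n × Fin n,
    (∀ a, (P a).1 < (P a).2 ∧ idx (P a).1 = Fin.rev (idx (P a).2)) ∧
    (∀ a b, a ≠ b →
      (P a).1 ≠ (P b).1 ∧ (P a).1 ≠ (P b).2 ∧
      (P a).2 ≠ (P b).1 ∧ (P a).2 ≠ (P b).2)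

/-- The generating operators of the image of the BMW algebra. -/
def BMWops (K : Type*) [Field K] (m n : ℕ) (ζ : K) :
    Set (Matrix (Fin n → Fin (2 * m)) (Fin n → Fin (2 * m)) K) :=
  {M | ∃ k, k + 1 < n ∧ (M = bopK K m n ζ k ∨ M = gopK K m n ζ k)}


/-!
Each generator `T_k`, `E_k` has a nonzero entry `M g h` only if `g` and `h` agree off the slots
`k, k + 1` and there they either coincide, are interchanged, or both carry a symplectic pair.
In each case `ℓ_s(h) ≤ ℓ_s(g)`: an interchange only relabels positions, and in the last case a
maximal matching of `h` can be modified by a transposition so that it pairs the two slots, which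
can then be refilled by those of `g`. Hence the simple tensors with `ℓ_s < f` span a subspace
stable under the whole algebra. If `ℓ_s(g) < f`, one of the slot pairs `(2i, 2i + 1)`, `i < f`,
is not symplectic, and `E_1 E_3 ⋯ E_{2f-1}` kills `v_g`, since the factors before `E_{2i+1}` do
not touch these slots. So it kills the stable subspace, which contains `v_idx u`.
-/

theorem eq_of_eq_off_pair {α β : Type*} {g h : α → β} {s t : α}
    (hagree : ∀ j, j ≠ s → j ≠ t → g j = h j) (hs : g s = h s) (ht : g t = h t) : g = h := by
  funext j
  by_cases hjs : j = s
  · rwa [hjs]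
  by_cases hjt : j = t
  · rwa [hjt]
  exact hagree j hjs hjt

namespace Matrix

section Support

variable {α β R : Type*} [Semiring R]

def supportedOn (r : α → β → Prop) : Submodule R (Matrix α β R) where
  carrier := {M | ∀ i j, M i j ≠ 0 → r i j}
  add_mem' {M N} hM hN i j hij := by
    by_cases h : M i j = 0
    · exact hN i j (by simpa [h] using hij)
    · exact hM i j h
  zero_mem' _ _ hij := absurd rfl hij
  smul_mem' _ _ hM i j hij := hM i j (right_ne_zero_of_mul hij)

theorem single_mem_supportedOn [DecidableEq α] [DecidableEq β] {r : α → β → Prop}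
    {i : α} {j : β} (h : r i j) (c : R) : single i j c ∈ supportedOn r := by
  intro i' j' hne
  obtain ⟨rfl, rfl⟩ : i = i' ∧ j = j' := by
    by_contra h'
    exact hne (by simp [h'])
  exact h

end Support

variable {ι R : Type*} [Fintype ι] [DecidableEq ι] [Ring R]

/-- Right multiplication by these matrices preserves the span of the basis vectors `v_i`
with `p i`. -/
def forwardClosedSubring (p : ι → Prop) : Subring (Matrix ι ι R) where
  __ := (supportedOn fun i j => p i → p j).toAddSubgroup
  one_mem' := by
    intro i j hij hi
    obtain rfl : i = j := by by_contra h; exact hij (one_apply_ne h)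
    exact hi
  mul_mem' {M N} hM hN := by
    intro i j hij hi
    obtain ⟨k, -, hk⟩ := Finset.exists_ne_zero_of_sum_ne_zero hij
    exact hN k j (right_ne_zero_of_mul hk) (hM i k (left_ne_zero_of_mul hk) hi)

theorem mul_row_eq_zero {p : ι → Prop} {M : Matrix ι ι R} (hM : M ∈ forwardClosedSubring p)
    {N : Matrix ι ι R} (hN : ∀ j, p j → N j = 0) {i : ι} (hi : p i) : (M * N) i = 0 := by
  ext k
  refine Finset.sum_eq_zero fun j _ => show M i j * N j k = 0 from ?_
  by_cases hij : M i j = 0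
  · rw [hij, zero_mul]
  · rw [hN j (hM i j hij hi), Pi.zero_apply, mul_zero]

end Matrix

section SymplecticMatching

variable {m n f : ℕ}

/-- The `f` pairs are `{e (.inl a), e (.inr a)}`; injectivity of `e` is their disjointness. -/
structure IsSymplecticMatching (idx : Fin n → Fin (2 * m)) (e : Fin f ⊕ Fin f → Fin n) :
    Prop where
  injective : Function.Injective e
  symplectic : ∀ y, idx (e y) = (idx (e y.swap)).rev

theorem hasPairs_iff_exists_isSymplecticMatching (idx : Fin n → Fin (2 * m)) :
    hasPairs m n f idx ↔ ∃ e : Fin f ⊕ Fin f → Fin n, IsSymplecticMatching idx e := by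
  constructor
  · rintro ⟨P, hP, hdisj⟩
    refine ⟨Sum.elim (fun a => (P a).1) (fun a => (P a).2), ?_, ?_⟩
    · rintro (a | a) (b | b) hab <;> by_cases h : a = b <;>
        simp_all [(hP b).1.ne, (hP b).1.ne']
    · rintro (a | a)
      · exact (hP a).2
      · simp [(hP a).2]
  · rintro ⟨e, he, hsymp⟩
    have hne a : e (.inl a) ≠ e (.inr a) := he.ne Sum.inl_ne_inr
    refine ⟨fun a => (min (e (.inl a)) (e (.inr a)), max (e (.inl a)) (e (.inr a))),
      fun a => ⟨min_lt_max.mpr (hne a), ?_⟩, fun a b hab => ?_⟩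
    · rcases le_total (e (.inl a)) (e (.inr a)) with h | h
      · simpa [h] using hsymp (.inl a)
      · simpa [h] using hsymp (.inr a)
    · have key : ∀ x ∈ ({e (.inl a), e (.inr a)} : Set (Fin n)),
          ∀ y ∈ ({e (.inl b), e (.inr b)} : Set (Fin n)), x ≠ y := by
        simp only [Set.mem_insert_iff, Set.mem_singleton_iff]
        rintro _ (rfl | rfl) _ (rfl | rfl) <;> exact he.ne (by simp [hab])
      have hmin c :
          min (e (.inl c)) (e (.inr c)) ∈ ({e (.inl c), e (.inr c)} : Set (Fin n)) := by
        rcases min_choice (e (.inl c)) (e (.inr c)) with h | h <;> simp [h]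
      have hmax c :
          max (e (.inl c)) (e (.inr c)) ∈ ({e (.inl c), e (.inr c)} : Set (Fin n)) := by
        rcases max_choice (e (.inl c)) (e (.inr c)) with h | h <;> simp [h]
      exact ⟨key _ (hmin a) _ (hmin b), key _ (hmin a) _ (hmax b),
        key _ (hmax a) _ (hmin b), key _ (hmax a) _ (hmax b)⟩

namespace IsSymplecticMatching

variable {idx g : Fin n → Fin (2 * m)} {e : Fin f ⊕ Fin f → Fin n}

theorem comp_perm (he : IsSymplecticMatching idx e) (σ : Equiv.Perm (Fin n)) :
    IsSymplecticMatching (idx ∘ σ) (σ.symm ∘ e) :=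
  ⟨σ.symm.injective.comp he.injective, fun y => by simpa using he.symplectic y⟩

/-- The partner `x` of `s` carries the same label as `t`, so the transposition of `x` and `t`
is a symmetry of `idx` and turns the matching into one pairing `s` with `t`. -/
theorem exists_pairing_of_mem_range (he : IsSymplecticMatching idx e) {s t : Fin n}
    (hst : s ≠ t) (hsymp : idx s = (idx t).rev) (hs : s ∈ Set.range e) :
    ∃ e' : Fin f ⊕ Fin f → Fin n,
      IsSymplecticMatching idx e' ∧ ∀ y, e' y = s ↔ e' y.swap = t := by
  obtain ⟨z, rfl⟩ := hs
  set x := e z.swap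
  have hzx : e z ≠ x := he.injective.ne (by cases z <;> simp)
  have hsymm : idx ∘ Equiv.swap x t = idx := by
    have hxt : idx x = idx t := by
      rw [he.symplectic z.swap, Sum.swap_swap, hsymp, Fin.rev_rev]
    funext j
    simp only [Function.comp_apply, Equiv.swap_apply_def]
    split_ifs <;> simp_all
  have he' := he.comp_perm (Equiv.swap x t)
  rw [hsymm, Equiv.symm_swap] at he'
  refine ⟨_, he', fun y => ?_⟩
  have hz : (Equiv.swap x t ∘ e) z = e z := Equiv.swap_apply_of_ne_of_ne hzx hst
  have hz' : (Equiv.swap x t ∘ e) z.swap = t := Equiv.swap_apply_left x t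
  rw [he'.injective.eq_iff' hz, he'.injective.eq_iff' hz',
    Sum.swap_leftInverse.injective.eq_iff]

theorem exists_pairing (he : IsSymplecticMatching idx e) {s t : Fin n}
    (hst : s ≠ t) (hsymp : idx s = (idx t).rev) :
    ∃ e' : Fin f ⊕ Fin f → Fin n,
      IsSymplecticMatching idx e' ∧ ∀ y, e' y = s ↔ e' y.swap = t := by
  by_cases hs : s ∈ Set.range e
  · exact he.exists_pairing_of_mem_range hst hsymp hs
  by_cases ht : t ∈ Set.range e
  · obtain ⟨e', he', hpair⟩ :=
      he.exists_pairing_of_mem_range hst.symm (by rw [hsymp, Fin.rev_rev]) ht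
    exact ⟨e', he', fun y => by simpa using (hpair y.swap).symm⟩
  · exact ⟨e, he, fun y => iff_of_false (fun h => hs ⟨y, h⟩) (fun h => ht ⟨_, h⟩)⟩

theorem of_eq_off_symplectic_pair (he : IsSymplecticMatching idx e) {s t : Fin n}
    (hpair : ∀ y, e y = s ↔ e y.swap = t) (hg : g s = (g t).rev)
    (hagree : ∀ j, j ≠ s → j ≠ t → g j = idx j) : IsSymplecticMatching g e := by
  refine ⟨he.injective, fun y => ?_⟩
  by_cases hys : e y = s
  · rw [hys, (hpair y).mp hys, hg]
  by_cases hyt : e y = t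
  · rw [hyt, (hpair y.swap).mpr (by simpa using hyt), hg, Fin.rev_rev]
  have hs' : e y.swap ≠ s := fun h => hyt (by simpa using (hpair y.swap).mp h)
  have ht' : e y.swap ≠ t := fun h => hys ((hpair y).mpr h)
  rw [hagree _ hys hyt, hagree _ hs' ht']
  exact he.symplectic y

end IsSymplecticMatching

theorem hasPairs_comp_perm {idx : Fin n → Fin (2 * m)} (h : hasPairs m n f idx)
    (σ : Equiv.Perm (Fin n)) : hasPairs m n f (idx ∘ σ) := by
  rw [hasPairs_iff_exists_isSymplecticMatching] at h ⊢
  obtain ⟨e, he⟩ := h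
  exact ⟨_, he.comp_perm σ⟩

theorem hasPairs_of_eq_off_symplectic_pair {idx g : Fin n → Fin (2 * m)}
    (h : hasPairs m n f idx) {s t : Fin n} (hst : s ≠ t) (hidx : idx s = (idx t).rev)
    (hg : g s = (g t).rev)
    (hagree : ∀ j, j ≠ s → j ≠ t → g j = idx j) : hasPairs m n f g := by
  rw [hasPairs_iff_exists_isSymplecticMatching] at h ⊢
  obtain ⟨e, he⟩ := h
  obtain ⟨e', he', hpair⟩ := he.exists_pairing hst hidx
  exact ⟨e', he'.of_eq_off_symplectic_pair hpair hg hagree⟩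

end SymplecticMatching

section Operators

variable {K : Type*} [Field K] {m n : ℕ}

theorem gammaMatK_mem_supportedOn (ζ : K) :
    gammaMatK K m ζ ∈ supportedOn fun x y => x.1 = x.2.rev ∧ y.1 = y.2.rev :=
  Submodule.sum_mem _ fun i _ => Submodule.sum_mem _ fun _ _ =>
    Submodule.smul_mem _ _ (single_mem_supportedOn ⟨(Fin.rev_rev i).symm, rfl⟩ _)

theorem betaMatK_mem_supportedOn (ζ : K) :
    betaMatK K m ζ ∈ supportedOn fun x y =>
      y = x ∨ y = x.swap ∨ (x.1 = x.2.rev ∧ y.1 = y.2.rev) := by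
  refine add_mem (add_mem ?_ ?_) (Submodule.smul_mem _ _ ?_) <;>
    refine Submodule.sum_mem _ fun i _ => ?_
  · exact add_mem (Submodule.smul_mem _ _ (single_mem_supportedOn (.inl rfl) _))
      (Submodule.smul_mem _ _
        (single_mem_supportedOn (.inr (.inr ⟨(Fin.rev_rev i).symm, rfl⟩)) _))
  · refine Submodule.sum_mem _ fun j _ => ?_
    split_ifs
    · exact single_mem_supportedOn (.inr (.inl rfl)) _
    · exact zero_mem _
  · refine Submodule.sum_mem _ fun j _ => ?_
    split_ifs
    · exact sub_mem (single_mem_supportedOn (.inl rfl) _)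
        (Submodule.smul_mem _ _
          (single_mem_supportedOn (.inr (.inr ⟨(Fin.rev_rev _).symm, rfl⟩)) _))
    · exact zero_mem _

theorem liftOpK_mem_supportedOn {k l : Fin n}
    {M : Matrix (Fin (2 * m) × Fin (2 * m)) (Fin (2 * m) × Fin (2 * m)) K}
    {r : Fin (2 * m) × Fin (2 * m) → Fin (2 * m) × Fin (2 * m) → Prop}
    (hM : M ∈ supportedOn r) :
    liftOpK K m n k l M ∈ supportedOn fun g h =>
      (∀ j, j ≠ k → j ≠ l → g j = h j) ∧ r (g k, g l) (h k, h l) := by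
  intro g h hne
  unfold liftOpK at hne
  split_ifs at hne with hagree
  · exact ⟨hagree, hM _ _ hne⟩
  · exact absurd rfl hne

theorem gopK_apply_ne_zero {ζ : K} {k : ℕ} (hk : k + 1 < n) {g h : Fin n → Fin (2 * m)}
    (hne : gopK K m n ζ k g h ≠ 0) :
    (∀ j, j ≠ ⟨k, by omega⟩ → j ≠ ⟨k + 1, hk⟩ → g j = h j) ∧
      g ⟨k, by omega⟩ = (g ⟨k + 1, hk⟩).rev ∧ h ⟨k, by omega⟩ = (h ⟨k + 1, hk⟩).rev := by
  rw [gopK, dif_pos hk] at hne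
  exact liftOpK_mem_supportedOn (gammaMatK_mem_supportedOn ζ) g h hne

theorem bopK_apply_ne_zero {ζ : K} {k : ℕ} (hk : k + 1 < n) {g h : Fin n → Fin (2 * m)}
    (hne : bopK K m n ζ k g h ≠ 0) :
    (∀ j, j ≠ ⟨k, by omega⟩ → j ≠ ⟨k + 1, hk⟩ → g j = h j) ∧
      ((h ⟨k, by omega⟩ = g ⟨k, by omega⟩ ∧ h ⟨k + 1, hk⟩ = g ⟨k + 1, hk⟩) ∨
        (h ⟨k, by omega⟩ = g ⟨k + 1, hk⟩ ∧ h ⟨k + 1, hk⟩ = g ⟨k, by omega⟩) ∨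
        (g ⟨k, by omega⟩ = (g ⟨k + 1, hk⟩).rev ∧ h ⟨k, by omega⟩ = (h ⟨k + 1, hk⟩).rev)) := by
  rw [bopK, dif_pos hk] at hne
  obtain ⟨hagree, hcases⟩ := liftOpK_mem_supportedOn (betaMatK_mem_supportedOn ζ) g h hne
  simpa only [Prod.ext_iff, Prod.fst_swap, Prod.snd_swap] using And.intro hagree hcases

end Operators

section Action

variable {K : Type*} [Field K] {m n : ℕ}

theorem gopK_row_eq_zero (ζ : K) {k : ℕ} (hk : k + 1 < n) {g : Fin n → Fin (2 * m)}
    (hg : g ⟨k, by omega⟩ ≠ (g ⟨k + 1, hk⟩).rev) : gopK K m n ζ k g = 0 :=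
  funext fun _ => by_contra fun hne => hg (gopK_apply_ne_zero hk hne).2.1

theorem gopK_mem_forwardClosedSubring (ζ : K) (k : ℕ) {p : (Fin n → Fin (2 * m)) → Prop}
    (hp : ∀ g h : Fin n → Fin (2 * m),
      (∀ j : Fin n, (j : ℕ) ≠ k → (j : ℕ) ≠ k + 1 → g j = h j) → p g → p h) :
    gopK K m n ζ k ∈ forwardClosedSubring p := by
  by_cases hk : k + 1 < n
  · intro g h hne
    refine hp g h fun j hj hj' => (gopK_apply_ne_zero hk hne).1 j ?_ ?_
    · exact fun h => hj (congrArg Fin.val h)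
    · exact fun h => hj' (congrArg Fin.val h)
  · rw [gopK, dif_neg hk]
    exact one_mem _

theorem prod_gopK_row_eq_zero (ζ : K) {f i : ℕ} (h2f : 2 * f ≤ n) (hi : i < f)
    {idx : Fin n → Fin (2 * m)}
    (hidx : idx ⟨2 * i, by omega⟩ ≠ (idx ⟨2 * i + 1, by omega⟩).rev) :
    ((List.range f).map fun j => gopK K m n ζ (2 * j)).prod idx = 0 := by
  induction f with
  | zero => omega
  | succ f ih =>
    rw [List.range_succ, List.map_append, List.prod_append, List.map_singleton,
      List.prod_singleton]
    rcases Nat.lt_succ_iff_lt_or_eq.mp hi with hi | rfl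
    · rw [mul_apply_eq_vecMul, ih (by omega) hi hidx, zero_vecMul]
    · refine mul_row_eq_zero (p := fun g => ∀ q : Fin n, 2 * i ≤ q → g q = idx q) ?_
        (fun g hg => gopK_row_eq_zero ζ (by omega) ?_) fun _ _ => rfl
      · refine Subring.list_prod_mem _ fun M hM => ?_
        obtain ⟨j, hj, rfl⟩ := List.mem_map.mp hM
        refine gopK_mem_forwardClosedSubring ζ _ fun g h hgh hg q hq => ?_
        rw [← hgh q (by grind) (by grind), hg q hq]
      · rwa [hg _ le_rfl, hg _ (Nat.le_succ _)]

theorem hasPairs_of_consecutive_pairs {f : ℕ} (h2f : 2 * f ≤ n) {idx : Fin n → Fin (2 * m)}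
    (hidx : ∀ i (hi : i < f), idx ⟨2 * i, by omega⟩ = (idx ⟨2 * i + 1, by omega⟩).rev) :
    hasPairs m n f idx := by
  refine (hasPairs_iff_exists_isSymplecticMatching idx).mpr
    ⟨Sum.elim (fun a => ⟨2 * a, by omega⟩) (fun a => ⟨2 * a + 1, by omega⟩), ⟨?_, ?_⟩⟩
  · rintro (a | a) (b | b) hab <;> simp [Fin.ext_iff] at hab ⊢ <;> omega
  · rintro (a | a)
    · exact hidx a a.2
    · simp [hidx a a.2]

theorem prod_gopK_row_eq_zero_of_not_hasPairs (ζ : K) {f : ℕ} (h2f : 2 * f ≤ n)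
    {idx : Fin n → Fin (2 * m)} (hidx : ¬ hasPairs m n f idx) :
    ((List.range f).map fun j => gopK K m n ζ (2 * j)).prod idx = 0 := by
  obtain ⟨i, hi, hbad⟩ : ∃ i, ∃ hi : i < f,
      idx ⟨2 * i, by omega⟩ ≠ (idx ⟨2 * i + 1, by omega⟩).rev := by
    by_contra! hall
    exact hidx (hasPairs_of_consecutive_pairs h2f hall)
  exact prod_gopK_row_eq_zero ζ h2f hi hbad

theorem hasPairs_of_gopK_apply_ne_zero (ζ : K) {f k : ℕ} (hk : k + 1 < n)
    {g h : Fin n → Fin (2 * m)} (hne : gopK K m n ζ k g h ≠ 0) (hh : hasPairs m n f h) :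
    hasPairs m n f g := by
  obtain ⟨hagree, hg, hh'⟩ := gopK_apply_ne_zero hk hne
  exact hasPairs_of_eq_off_symplectic_pair hh (by simp) hh' hg hagree

theorem hasPairs_of_bopK_apply_ne_zero (ζ : K) {f k : ℕ} (hk : k + 1 < n)
    {g h : Fin n → Fin (2 * m)} (hne : bopK K m n ζ k g h ≠ 0) (hh : hasPairs m n f h) :
    hasPairs m n f g := by
  obtain ⟨hagree, ⟨hs, ht⟩ | ⟨hs, ht⟩ | ⟨hg, hh'⟩⟩ := bopK_apply_ne_zero hk hne
  · obtain rfl : g = h := eq_of_eq_off_pair hagree hs.symm ht.symm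
    exact hh
  · have hσ : g = h ∘ Equiv.swap ⟨k, by omega⟩ ⟨k + 1, hk⟩ :=
      eq_of_eq_off_pair (s := ⟨k, by omega⟩) (t := ⟨k + 1, hk⟩)
        (fun j hjs hjt => by
          simp [Equiv.swap_apply_of_ne_of_ne hjs hjt, hagree j hjs hjt])
        (by simp [ht]) (by simp [hs])
    exact hσ ▸ hasPairs_comp_perm hh _
  · exact hasPairs_of_eq_off_symplectic_pair hh (by simp) hh' hg hagree

theorem closure_BMWops_le_forwardClosedSubring (ζ : K) (f : ℕ) :
    Subring.closure (BMWops K m n ζ) ≤ forwardClosedSubring fun g => ¬ hasPairs m n f g := by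
  rw [Subring.closure_le]
  rintro M ⟨k, hk, rfl | rfl⟩ g h hne hg hh
  · exact hg (hasPairs_of_bopK_apply_ne_zero ζ hk hne hh)
  · exact hg (hasPairs_of_gopK_apply_ne_zero ζ hk hne hh)

end Action

theorem stmt16 (K : Type*) [Field K] (ζ : K) (m n f : ℕ)
    (h2f : 2 * f ≤ n) (idx : Fin n → Fin (2 * m)) :
    -- γ'_{k+1} kills v_idx as soon as slots k, k+1 do not carry a symplectic pair
    (∀ (k : ℕ) (h : k + 1 < n),
      idx ⟨k, by omega⟩ ≠ Fin.rev (idx ⟨k + 1, h⟩) →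
      Matrix.vecMul (Pi.single idx (1 : K)) (gopK K m n ζ k) = 0) ∧
    -- if f > ℓ_s(idx) then E_1 E_3 ⋯ E_{2f-1} kills v_idx, and so does
    -- the whole two-sided ideal B^{(f)}
    (¬ hasPairs m n f idx →
      Matrix.vecMul (Pi.single idx (1 : K))
        (((List.range f).map fun j => gopK K m n ζ (2 * j)).prod) = 0 ∧
      ∀ u ∈ Subring.closure (BMWops K m n ζ),
        ∀ w ∈ Subring.closure (BMWops K m n ζ),
          Matrix.vecMul (Pi.single idx (1 : K))
            (u * (((List.range f).map fun j => gopK K m n ζ (2 * j)).prod) * w)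
            = 0) := by
  simp only [single_one_vecMul, row]
  refine ⟨fun k hk hidx => gopK_row_eq_zero ζ hk hidx, fun hidx => ⟨?_, fun u hu w _ => ?_⟩⟩
  · exact prod_gopK_row_eq_zero_of_not_hasPairs ζ h2f hidx
  · have huE := mul_row_eq_zero (closure_BMWops_le_forwardClosedSubring ζ f hu)
      (fun g hg => prod_gopK_row_eq_zero_of_not_hasPairs ζ h2f hg) hidx
    rw [mul_apply_eq_vecMul, huE, zero_vecMul]
end
end
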